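/- arXiv:1810.06869 — 6 statements merged into one kernel-verified Lean document; each statement's English description precedes it below -/
import Mathlib

section
/- For a finite weighted graph G with nonnegative coupling constants J_{ij} ≥ 0 and external field h ≥ 0, the Ising measure μ_G(σ) ∝ exp(Σ_{i<j} J_{ij}σ_iσ_j + h Σ_i σ_i) on {-1,1}^{V_G} satisfies the first Griffiths inequality: for any subset A of V_G, the expectation of σ_A = Π_{i∈A} σ_i is nonnegative, i.e. ⟨σ_A⟩_G ≥ 0. -/
open Finset

noncomputable section

/-- The spin value associated to a boolean: `+1` or `-1`. -/
def spin (b : Bool) : ℝ := if b then 1 else -1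

/-- The Ising Hamiltonian (as appearing in the Boltzmann weight) on a finite weighted
graph with couplings `J` (over unordered pairs, encoded via `i < j`) and field `h`. -/
def ham {V : Type*} [Fintype V] [LinearOrder V] (J : V → V → ℝ) (h : ℝ)
    (σ : V → Bool) : ℝ :=
  (∑ i : V, ∑ j : V, if i < j then J i j * spin (σ i) * spin (σ j) else 0)
    + h * ∑ i : V, spin (σ i)

/-- The expectation `⟨σ_A⟩_G` of `σ_A = ∏_{i∈A} σ_i` under the Ising measure
`μ_G(σ) ∝ exp(Σ_{i<j} J_{ij} σ_i σ_j + h Σ_i σ_i)`. -/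
def corr {V : Type*} [Fintype V] [LinearOrder V] (J : V → V → ℝ) (h : ℝ)
    (A : Finset V) : ℝ :=
  (∑ σ : V → Bool, (∏ i ∈ A, spin (σ i)) * Real.exp (ham J h σ)) /
    (∑ σ : V → Bool, Real.exp (ham J h σ))

/-
Since `J ≥ 0`, `h ≥ 0` and every product of spins is `±1`,
`exp (a x) = cosh a + sinh a * x` writes each Boltzmann factor as a polynomial in the spins with
nonnegative coefficients, so `σ_A exp(H)` is one too. Summing over configurations kills every
monomial with an odd exponent and gives a positive multiple of every other one, so the numerator
of `⟨σ_A⟩` is nonnegative.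
-/

section SpinPolynomials

variable (V : Type*) [Fintype V]

def weightedSpinMonomials : Submonoid ((V → Bool) → ℝ) where
  carrier := {f | ∃ (c : ℝ) (k : V → ℕ), 0 ≤ c ∧ f = fun σ => c * ∏ i, spin (σ i) ^ k i}
  one_mem' := ⟨1, 0, zero_le_one, by ext; simp⟩
  mul_mem' := by
    rintro _ _ ⟨c, k, hc, rfl⟩ ⟨c', k', hc', rfl⟩
    refine ⟨c * c', k + k', mul_nonneg hc hc', ?_⟩
    ext σ
    simp only [Pi.mul_apply, Pi.add_apply, pow_add, prod_mul_distrib]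
    ring

/-- Polynomials in the spins with nonnegative coefficients. -/
def ferromagneticPolynomials : Subsemiring ((V → Bool) → ℝ) :=
  (weightedSpinMonomials V).subsemiringClosure

variable {V}

lemma const_mem_ferromagneticPolynomials {c : ℝ} (hc : 0 ≤ c) :
    (fun _ => c) ∈ ferromagneticPolynomials V :=
  AddSubmonoid.subset_closure ⟨c, 0, hc, by ext; simp⟩

variable [DecidableEq V]

lemma spin_pow_add_spin_pow_nonneg (n : ℕ) : 0 ≤ spin true ^ n + spin false ^ n := by
  rcases Nat.even_or_odd n with hn | hn <;> simp [spin, hn.neg_one_pow]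

lemma sum_spinMonomial_nonneg (k : V → ℕ) : 0 ≤ ∑ σ : V → Bool, ∏ i, spin (σ i) ^ k i := by
  rw [← Fintype.prod_sum (fun i b => spin b ^ k i)]
  exact prod_nonneg fun i _ => by
    simpa only [Fintype.sum_bool] using spin_pow_add_spin_pow_nonneg (k i)

lemma sum_nonneg_of_mem_ferromagneticPolynomials {f : (V → Bool) → ℝ}
    (hf : f ∈ ferromagneticPolynomials V) : 0 ≤ ∑ σ, f σ := by
  replace hf : f ∈ AddSubmonoid.closure (weightedSpinMonomials V : Set _) := hf
  induction hf using AddSubmonoid.closure_induction with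
  | mem f hf =>
    obtain ⟨c, k, hc, rfl⟩ := hf
    rw [← mul_sum]
    exact mul_nonneg hc (sum_spinMonomial_nonneg k)
  | zero => simp
  | add f g _ _ hf hg => simpa only [Pi.add_apply, sum_add_distrib] using add_nonneg hf hg

lemma spin_mem_ferromagneticPolynomials (i : V) :
    (fun σ => spin (σ i)) ∈ ferromagneticPolynomials V := by
  refine AddSubmonoid.subset_closure ⟨1, Pi.single i 1, zero_le_one, ?_⟩
  ext σ
  simp [Pi.single_apply, pow_ite]

end SpinPolynomials

lemma exp_mul_eq_cosh_add_sinh_mul {x : ℝ} (hx : x = 1 ∨ x = -1) (a : ℝ) :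
    Real.exp (a * x) = Real.cosh a + Real.sinh a * x := by
  rcases hx with rfl | rfl
  · simp [Real.cosh_add_sinh]
  · simp [← Real.cosh_sub_sinh, sub_eq_add_neg]

lemma exp_mul_mem_ferromagneticPolynomials {V : Type*} [Fintype V] [DecidableEq V] {a : ℝ}
    (ha : 0 ≤ a) {x : (V → Bool) → ℝ} (hx : x ∈ ferromagneticPolynomials V)
    (hx₁ : ∀ σ, x σ = 1 ∨ x σ = -1) :
    (fun σ => Real.exp (a * x σ)) ∈ ferromagneticPolynomials V := by
  have hexp : (fun σ => Real.exp (a * x σ))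
      = (fun _ => Real.cosh a) + (fun _ => Real.sinh a) * x :=
    funext fun σ => exp_mul_eq_cosh_add_sinh_mul (hx₁ σ) a
  rw [hexp]
  exact add_mem (const_mem_ferromagneticPolynomials (Real.cosh_pos a).le)
    (mul_mem (const_mem_ferromagneticPolynomials (Real.sinh_nonneg_iff.mpr ha)) hx)

lemma exp_sum_mem {α ι : Type*} {S : Subsemiring (α → ℝ)} (s : Finset ι) {f : ι → α → ℝ}
    (hf : ∀ i ∈ s, (fun σ => Real.exp (f i σ)) ∈ S) :
    (fun σ => Real.exp (∑ i ∈ s, f i σ)) ∈ S := by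
  convert prod_mem hf using 1
  ext σ
  simp only [Real.exp_sum, prod_apply]

lemma exp_add_mem {α : Type*} {S : Subsemiring (α → ℝ)} {f g : α → ℝ}
    (hf : (fun σ => Real.exp (f σ)) ∈ S) (hg : (fun σ => Real.exp (g σ)) ∈ S) :
    (fun σ => Real.exp (f σ + g σ)) ∈ S := by
  simp only [Real.exp_add]
  exact mul_mem hf hg

section Ising

variable {V : Type*} [Fintype V] [LinearOrder V]

lemma ham_eq_pair_sum_add_field_sum (J : V → V → ℝ) (h : ℝ) (σ : V → Bool) :
    ham J h σ = (∑ i, ∑ j, (if i < j then J i j else 0) * (spin (σ i) * spin (σ j)))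
      + ∑ i, h * spin (σ i) := by
  simp only [ham, mul_sum, ite_mul, zero_mul, mul_assoc]

lemma spin_eq_one_or_eq_neg_one (b : Bool) : spin b = 1 ∨ spin b = -1 := by
  cases b <;> simp [spin]

lemma spin_mul_spin_eq_one_or_eq_neg_one (b c : Bool) :
    spin b * spin c = 1 ∨ spin b * spin c = -1 := by
  cases b <;> cases c <;> simp [spin]

lemma exp_ham_mem_ferromagneticPolynomials {J : V → V → ℝ} (hJ : ∀ i j, 0 ≤ J i j) {h : ℝ}
    (hh : 0 ≤ h) : (fun σ => Real.exp (ham J h σ)) ∈ ferromagneticPolynomials V := by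
  simp only [ham_eq_pair_sum_add_field_sum]
  refine exp_add_mem (exp_sum_mem _ fun i _ => exp_sum_mem _ fun j _ => ?_)
    (exp_sum_mem _ fun i _ => ?_)
  · exact exp_mul_mem_ferromagneticPolynomials (by split_ifs <;> simp [hJ])
      (mul_mem (spin_mem_ferromagneticPolynomials i) (spin_mem_ferromagneticPolynomials j))
      fun σ => spin_mul_spin_eq_one_or_eq_neg_one _ _
  · exact exp_mul_mem_ferromagneticPolynomials hh (spin_mem_ferromagneticPolynomials i)
      fun σ => spin_eq_one_or_eq_neg_one _

lemma prod_spin_mem_ferromagneticPolynomials (A : Finset V) :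
    (fun σ => ∏ i ∈ A, spin (σ i)) ∈ ferromagneticPolynomials V := by
  convert prod_mem fun i (_ : i ∈ A) => spin_mem_ferromagneticPolynomials i using 1
  ext σ
  simp only [prod_apply]

end Ising

theorem griffiths_first_general {V : Type*} [Fintype V] [LinearOrder V]
    (J : V → V → ℝ) (hJ : ∀ i j, 0 ≤ J i j)
    (h : ℝ) (hh : 0 ≤ h) (A : Finset V) :
    0 ≤ corr J h A := by
  refine div_nonneg ?_ (sum_pos (fun σ _ => Real.exp_pos _) univ_nonempty).le
  exact sum_nonneg_of_mem_ferromagneticPolynomials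
    (mul_mem (prod_spin_mem_ferromagneticPolynomials A)
      (exp_ham_mem_ferromagneticPolynomials hJ hh))

/-- First Griffiths inequality: for nonnegative couplings and nonnegative field,
`⟨σ_A⟩_G ≥ 0` for every `A ⊆ V_G`. -/
theorem griffiths_first {V : Type*} [Fintype V] [LinearOrder V]
    (J : V → V → ℝ) (hJsymm : ∀ i j, J i j = J j i) (hJ : ∀ i j, 0 ≤ J i j)
    (h : ℝ) (hh : 0 ≤ h) (A : Finset V) :
    0 ≤ corr J h A :=
  griffiths_first_general J hJ h hh A
end
end

section
/- For a finite weighted graph G with nonnegative couplings and nonnegative external field h, the second Griffiths inequality holds: for any subsets A, B of V_G, ⟨σ_A σ_B⟩_G ≥ ⟨σ_A⟩_G ⟨σ_B⟩_G. -/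
/-!
Ginibre's duplication trick. Writing `w = exp ∘ ham` and `Z = ∑ w`, the difference
`Z ∑ σ_A σ_B w - (∑ σ_A w)(∑ σ_B w)` equals `∑_{σ,τ} σ_A (σ_B - τ_B) w(σ) w(τ)`.
Substituting `τ = σ x` (pointwise product) gives `∑_x (1 - x_B) ∑_σ σ_A σ_B exp H_x(σ)`, where `H_x`
is the Ising Hamiltonian with couplings `J_ij (1 + x_i x_j) ≥ 0` and fields `h (1 + x_i) ≥ 0`.
The inner sums are nonnegative by the first Griffiths inequality: `exp H_x` is a product of factors
`exp (a σ_S) = cosh a + sinh a σ_S` with `a ≥ 0`, hence a nonnegative combination of monomials `σ_S`,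
and so is its product with `σ_A σ_B`; each monomial has a nonnegative sum over configurations.
-/

open Finset

noncomputable section

open scoped NNReal Pointwise

section SpinMonomials
variable {V : Type*}

def spinMonomial (S : Finset V) (σ : V → Bool) : ℝ := ∏ i ∈ S, spin (σ i)

lemma spin_mul_self (b : Bool) : spin b * spin b = 1 := by cases b <;> norm_num [spin]

lemma spinMonomial_mul_self (S : Finset V) (σ : V → Bool) :
    spinMonomial S σ * spinMonomial S σ = 1 := by
  simp [spinMonomial, ← prod_mul_distrib, spin_mul_self]

lemma spinMonomial_le_one (S : Finset V) (σ : V → Bool) : spinMonomial S σ ≤ 1 := by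
  nlinarith [spinMonomial_mul_self S σ, sq_nonneg (spinMonomial S σ - 1)]

lemma spinMonomial_mul [DecidableEq V] (S T : Finset V) (σ : V → Bool) :
    spinMonomial S σ * spinMonomial T σ = spinMonomial (symmDiff S T) σ := by
  have hunion :
      spinMonomial (S ∪ T) σ = spinMonomial (symmDiff S T) σ * spinMonomial (S ∩ T) σ := by
    rw [spinMonomial, spinMonomial, spinMonomial, symmDiff_eq_sup_sdiff_inf]
    exact (prod_sdiff inter_subset_union).symm
  rw [spinMonomial, spinMonomial, ← prod_union_inter, ← spinMonomial, ← spinMonomial, hunion,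
    mul_assoc, spinMonomial_mul_self, mul_one]

lemma sum_spinMonomial_nonneg_s1 [Fintype V] [DecidableEq V] (S : Finset V) :
    0 ≤ ∑ σ : V → Bool, spinMonomial S σ := by
  have hfactor : ∀ σ : V → Bool, spinMonomial S σ = ∏ i, if i ∈ S then spin (σ i) else 1 := by
    intro σ
    rw [spinMonomial, prod_ite_mem, univ_inter]
  simp_rw [hfactor]
  rw [← Fintype.prod_sum (fun i (b : Bool) => if i ∈ S then spin b else 1)]
  refine prod_nonneg fun i _ => ?_
  by_cases hi : i ∈ S <;> simp [hi, spin]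

end SpinMonomials

section NonnegCombinations
variable {V : Type*}

def nonnegSpinSpan (V : Type*) : Submodule ℝ≥0 ((V → Bool) → ℝ) :=
  Submodule.span ℝ≥0 (Set.range spinMonomial)

lemma spinMonomial_mem_nonnegSpinSpan (S : Finset V) : spinMonomial S ∈ nonnegSpinSpan V :=
  Submodule.subset_span ⟨S, rfl⟩

lemma one_mem_nonnegSpinSpan : (1 : (V → Bool) → ℝ) ∈ nonnegSpinSpan V := by
  convert spinMonomial_mem_nonnegSpinSpan (∅ : Finset V)
  ext σ
  simp [spinMonomial]

lemma mul_mem_nonnegSpinSpan [DecidableEq V] {f g : (V → Bool) → ℝ}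
    (hf : f ∈ nonnegSpinSpan V) (hg : g ∈ nonnegSpinSpan V) : f * g ∈ nonnegSpinSpan V := by
  have hclosed : Set.range (spinMonomial (V := V)) * Set.range (spinMonomial (V := V)) ⊆
      Set.range (spinMonomial (V := V)) := by
    rintro _ ⟨_, ⟨S, rfl⟩, _, ⟨T, rfl⟩, rfl⟩
    exact ⟨symmDiff S T, funext fun σ => (spinMonomial_mul S T σ).symm⟩
  have hfg := Submodule.mul_mem_mul hf hg
  rw [nonnegSpinSpan, Submodule.span_mul_span] at hfg
  exact Submodule.span_mono hclosed hfg

lemma prod_mem_nonnegSpinSpan [DecidableEq V] {ι : Type*} (s : Finset ι)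
    (f : ι → (V → Bool) → ℝ) (hf : ∀ i ∈ s, f i ∈ nonnegSpinSpan V) :
    ∏ i ∈ s, f i ∈ nonnegSpinSpan V :=
  prod_induction f (· ∈ nonnegSpinSpan V) (fun _ _ => mul_mem_nonnegSpinSpan)
    one_mem_nonnegSpinSpan hf

-- Since `m = ±1`, `exp (a m) = cosh a + sinh a • m`.
lemma exp_mul_spinMonomial_mem_nonnegSpinSpan {a : ℝ} (ha : 0 ≤ a) (S : Finset V) :
    (fun σ => Real.exp (a * spinMonomial S σ)) ∈ nonnegSpinSpan V := by
  have hexpand : (fun σ => Real.exp (a * spinMonomial S σ)) =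
      (⟨Real.cosh a, (Real.cosh_pos a).le⟩ : ℝ≥0) • (1 : (V → Bool) → ℝ) +
        (⟨Real.sinh a, Real.sinh_nonneg_iff.mpr ha⟩ : ℝ≥0) • spinMonomial S := by
    ext σ
    have hsq := spinMonomial_mul_self S σ
    have hsign : spinMonomial S σ = 1 ∨ spinMonomial S σ = -1 := by
      rcases le_or_gt (spinMonomial S σ) 0 with h | h
      · right; nlinarith
      · left; nlinarith
    rcases hsign with h | h <;>
      simp [h, Real.cosh_eq, Real.sinh_eq, Real.exp_neg] <;> ring
  rw [hexpand]
  exact add_mem (Submodule.smul_mem _ _ one_mem_nonnegSpinSpan)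
    (Submodule.smul_mem _ _ (spinMonomial_mem_nonnegSpinSpan S))

lemma sum_nonneg_of_mem_nonnegSpinSpan [Fintype V] [DecidableEq V] {f : (V → Bool) → ℝ}
    (hf : f ∈ nonnegSpinSpan V) : 0 ≤ ∑ σ, f σ := by
  induction hf using Submodule.span_induction with
  | mem _ hm =>
    obtain ⟨S, rfl⟩ := hm
    exact sum_spinMonomial_nonneg_s1 S
  | zero => simp
  | add _ _ _ _ hf hg => simpa [sum_add_distrib] using add_nonneg hf hg
  | smul c _ _ hf => simpa [NNReal.smul_def, ← mul_sum] using mul_nonneg c.2 hf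

end NonnegCombinations

section Ising
variable {V : Type*} [Fintype V] [LinearOrder V]

def isingHam (J : V → V → ℝ) (hv : V → ℝ) (σ : V → Bool) : ℝ :=
  (∑ i : V, ∑ j : V, if i < j then J i j * spin (σ i) * spin (σ j) else 0)
    + ∑ i : V, hv i * spin (σ i)

lemma exp_isingHam_mem_nonnegSpinSpan {J : V → V → ℝ} (hJ : ∀ i j, 0 ≤ J i j)
    {hv : V → ℝ} (hhv : ∀ i, 0 ≤ hv i) :
    (fun σ => Real.exp (isingHam J hv σ)) ∈ nonnegSpinSpan V := by
  have hpair : ∀ i j, (fun σ : V → Bool =>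
      Real.exp (if i < j then J i j * spin (σ i) * spin (σ j) else 0)) ∈ nonnegSpinSpan V := by
    intro i j
    by_cases hij : i < j
    · convert exp_mul_spinMonomial_mem_nonnegSpinSpan (hJ i j) {i, j} using 2 with σ
      rw [if_pos hij, spinMonomial, prod_pair hij.ne, mul_assoc]
    · simp only [hij, if_false, Real.exp_zero]
      exact one_mem_nonnegSpinSpan
  have hsite : ∀ i, (fun σ : V → Bool => Real.exp (hv i * spin (σ i))) ∈ nonnegSpinSpan V := by
    intro i
    simpa [spinMonomial] using exp_mul_spinMonomial_mem_nonnegSpinSpan (hhv i) {i}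
  have hfactor : (fun σ => Real.exp (isingHam J hv σ)) =
      (∏ i, ∏ j, fun σ : V → Bool =>
        Real.exp (if i < j then J i j * spin (σ i) * spin (σ j) else 0)) *
      ∏ i, fun σ : V → Bool => Real.exp (hv i * spin (σ i)) := by
    ext σ
    simp only [isingHam, Real.exp_add, Real.exp_sum, Pi.mul_apply, prod_apply]
  rw [hfactor]
  exact mul_mem_nonnegSpinSpan
    (prod_mem_nonnegSpinSpan _ _ fun i _ => prod_mem_nonnegSpinSpan _ _ fun j _ => hpair i j)
    (prod_mem_nonnegSpinSpan _ _ fun i _ => hsite i)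

theorem griffiths_first_s1 {J : V → V → ℝ} (hJ : ∀ i j, 0 ≤ J i j)
    {hv : V → ℝ} (hhv : ∀ i, 0 ≤ hv i) (S : Finset V) :
    0 ≤ ∑ σ, spinMonomial S σ * Real.exp (isingHam J hv σ) :=
  sum_nonneg_of_mem_nonnegSpinSpan
    (mul_mem_nonnegSpinSpan (spinMonomial_mem_nonnegSpinSpan S)
      (exp_isingHam_mem_nonnegSpinSpan hJ hhv))

end Ising

section Duplication
variable {V : Type*}

def spinProd (σ τ : V → Bool) : V → Bool := fun i => σ i == τ i

lemma spin_spinProd (σ τ : V → Bool) (i : V) :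
    spin (spinProd σ τ i) = spin (σ i) * spin (τ i) := by
  unfold spinProd
  cases σ i <;> cases τ i <;> norm_num [spin]

lemma spinProd_involutive (σ : V → Bool) : Function.Involutive (spinProd σ) := by
  intro τ
  funext i
  show (σ i == (σ i == τ i)) = τ i
  cases σ i <;> cases τ i <;> rfl

lemma spinMonomial_spinProd (S : Finset V) (σ τ : V → Bool) :
    spinMonomial S (spinProd σ τ) = spinMonomial S σ * spinMonomial S τ := by
  simp only [spinMonomial, spin_spinProd, prod_mul_distrib]

lemma ham_add_ham_spinProd [Fintype V] [LinearOrder V] (J : V → V → ℝ) (h : ℝ)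
    (σ τ : V → Bool) :
    ham J h σ + ham J h (spinProd σ τ) =
      isingHam (fun i j => J i j * (1 + spin (τ i) * spin (τ j)))
        (fun i => h * (1 + spin (τ i))) σ := by
  simp only [ham, isingHam, spin_spinProd]
  rw [add_add_add_comm]
  congr 1
  · rw [← sum_add_distrib]
    refine sum_congr rfl fun i _ => ?_
    rw [← sum_add_distrib]
    refine sum_congr rfl fun j _ => ?_
    split_ifs <;> ring
  · simp only [mul_sum, ← sum_add_distrib]
    refine sum_congr rfl fun i _ => ?_
    ring

end Duplication

section Second
variable {V : Type*} [Fintype V] [LinearOrder V]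

theorem griffiths_second_unnormalized {J : V → V → ℝ} (hJ : ∀ i j, 0 ≤ J i j)
    {h : ℝ} (hh : 0 ≤ h) (A B : Finset V) :
    (∑ σ, spinMonomial A σ * Real.exp (ham J h σ)) *
        (∑ σ, spinMonomial B σ * Real.exp (ham J h σ)) ≤
      (∑ σ, spinMonomial A σ * spinMonomial B σ * Real.exp (ham J h σ)) *
        ∑ σ, Real.exp (ham J h σ) := by
  have hduplicate :
      (∑ σ, spinMonomial A σ * spinMonomial B σ * Real.exp (ham J h σ)) *
          (∑ σ, Real.exp (ham J h σ)) -
        (∑ σ, spinMonomial A σ * Real.exp (ham J h σ)) *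
          (∑ σ, spinMonomial B σ * Real.exp (ham J h σ)) =
      ∑ σ, ∑ τ, spinMonomial A σ * (spinMonomial B σ - spinMonomial B τ) *
        Real.exp (ham J h σ + ham J h τ) := by
    simp only [sum_mul_sum, ← sum_sub_distrib, Real.exp_add]
    refine sum_congr rfl fun σ _ => sum_congr rfl fun τ _ => ?_
    ring
  -- Substituting `τ = σ x` turns the pair Hamiltonian into a ferromagnetic one in `σ`.
  have hsubstitute : ∀ σ, ∑ τ, spinMonomial A σ * (spinMonomial B σ - spinMonomial B τ) *
        Real.exp (ham J h σ + ham J h τ) =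
      ∑ x, (1 - spinMonomial B x) * (spinMonomial (symmDiff A B) σ *
        Real.exp (isingHam (fun i j => J i j * (1 + spin (x i) * spin (x j)))
          (fun i => h * (1 + spin (x i))) σ)) := by
    intro σ
    rw [← (spinProd_involutive σ).bijective.sum_comp]
    refine sum_congr rfl fun x _ => ?_
    rw [spinMonomial_spinProd, ham_add_ham_spinProd, ← spinMonomial_mul]
    ring
  rw [← sub_nonneg, hduplicate, sum_congr rfl fun σ _ => hsubstitute σ, sum_comm]
  refine sum_nonneg fun x _ => ?_
  rw [← mul_sum]
  refine mul_nonneg (sub_nonneg.2 (spinMonomial_le_one B x)) (griffiths_first_s1 ?_ ?_ _)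
  · intro i j
    exact mul_nonneg (hJ i j) (by cases x i <;> cases x j <;> norm_num [spin])
  · intro i
    exact mul_nonneg hh (by cases x i <;> norm_num [spin])

end Second

theorem griffiths_second_general {V : Type*} [Fintype V] [LinearOrder V]
    (J : V → V → ℝ) (hJ : ∀ i j, 0 ≤ J i j)
    (h : ℝ) (hh : 0 ≤ h) (A B : Finset V) :
    corr J h A * corr J h B ≤
      (∑ σ : V → Bool, ((∏ i ∈ A, spin (σ i)) * (∏ j ∈ B, spin (σ j))) *
          Real.exp (ham J h σ)) /
        (∑ σ : V → Bool, Real.exp (ham J h σ)) := by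
  have hZ : 0 < ∑ σ : V → Bool, Real.exp (ham J h σ) :=
    sum_pos (fun σ _ => Real.exp_pos _) univ_nonempty
  calc corr J h A * corr J h B
      = ((∑ σ, spinMonomial A σ * Real.exp (ham J h σ)) *
          (∑ σ, spinMonomial B σ * Real.exp (ham J h σ))) /
        ((∑ σ, Real.exp (ham J h σ)) * ∑ σ, Real.exp (ham J h σ)) :=
        div_mul_div_comm _ _ _ _
    _ ≤ ((∑ σ, spinMonomial A σ * spinMonomial B σ * Real.exp (ham J h σ)) *
          ∑ σ, Real.exp (ham J h σ)) /
        ((∑ σ, Real.exp (ham J h σ)) * ∑ σ, Real.exp (ham J h σ)) :=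
        div_le_div_of_nonneg_right (griffiths_second_unnormalized hJ hh A B) (by positivity)
    _ = _ := mul_div_mul_right _ _ hZ.ne'

/-- Second Griffiths inequality: `⟨σ_A σ_B⟩_G ≥ ⟨σ_A⟩_G ⟨σ_B⟩_G` for nonnegative
couplings and nonnegative field.  Note `σ_A σ_B = ∏_{i∈A}σ_i · ∏_{j∈B}σ_j`. -/
theorem griffiths_second {V : Type*} [Fintype V] [LinearOrder V]
    (J : V → V → ℝ) (hJsymm : ∀ i j, J i j = J j i) (hJ : ∀ i j, 0 ≤ J i j)
    (h : ℝ) (hh : 0 ≤ h) (A B : Finset V) :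
    corr J h A * corr J h B ≤
      (∑ σ : V → Bool, ((∏ i ∈ A, spin (σ i)) * (∏ j ∈ B, spin (σ j))) *
          Real.exp (ham J h σ)) /
        (∑ σ : V → Bool, Real.exp (ham J h σ)) :=
  griffiths_second_general J hJ h hh A B
end
end

section
/- Let ξ be a norm on ℝ^d, let K_ξ = {t ∈ ℝ^d : (t,s) ≤ ξ(s) for all s ∈ S^{d-1}} be its Wulff shape, and for t ∈ ∂K_ξ and δ ∈ (0,1) define the forward cone Y^◁_δ(t) = {x ∈ ℝ^d : (t,x) > (1-δ)ξ(x)} and backward cone Y^▶_δ(t) = -Y^◁_δ(t). Let A ⊂ ℝ^d be bounded and let δ, δ' > 0 with δ + δ' < 1. Then the set V = {x ∈ ℝ^d : A δ-sees x and A (δ+δ')-blocks x} is bounded, where 'A δ-sees x' means there exists y ∈ A with x ∈ y + Y^◁_δ(t), and 'A δ-blocks x' means A is not contained in x + Y^▶_δ(t). -/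
/-!
If `y ∈ A` sees `x` in the forward `δ`-cone and `z ∈ A` witnesses that `x` is
`(δ + δ')`-blocked, then writing `(t, x - z) = (t, x - y) + (t, y - z)`, using
`(t, ·) ≤ ξ` on `z - y` and the triangle inequality for `ξ (x - z)` gives
`δ' ξ (x - y) < (2 - δ - δ') ξ (y - z)`. The right side is bounded since `A` is, so `x` stays
within bounded `ξ`-distance of `A`, and in finite dimension `ξ` dominates a multiple of the
Euclidean norm.
-/

open scoped Pointwise

section

variable {E : Type*} [AddCommGroup E] [Module ℝ E]

theorem Seminorm.mul_lt_of_seen_of_not_blocked (p : Seminorm ℝ E) (ℓ : E →ₗ[ℝ] ℝ)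
    (hℓ : ∀ v, ℓ v ≤ p v) {δ δ' : ℝ} (hδδ' : δ + δ' ≤ 1) {x y z : E}
    (hy : (1 - δ) * p (x - y) < ℓ (x - y)) (hz : ℓ (x - z) ≤ (1 - (δ + δ')) * p (x - z)) :
    δ' * p (x - y) < (2 - (δ + δ')) * p (y - z) := by
  have hℓ_split : ℓ (x - z) = ℓ (x - y) + ℓ (y - z) := by
    rw [← map_add, sub_add_sub_cancel]
  have hℓ_yz : -p (y - z) ≤ ℓ (y - z) := by
    have := hℓ (z - y)
    rw [← neg_sub, map_neg, map_neg_eq_map] at this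
    linarith
  have hp_xz : (1 - (δ + δ')) * p (x - z) ≤ (1 - (δ + δ')) * (p (x - y) + p (y - z)) :=
    mul_le_mul_of_nonneg_left (by simpa using map_add_le_add p (x - y) (y - z)) (by linarith)
  linarith

end

section

variable {E : Type*} [NormedAddCommGroup E] [NormedSpace ℝ E] [FiniteDimensional ℝ E]

theorem Seminorm.continuous_of_finiteDimensional (p : Seminorm ℝ E) : Continuous p :=
  p.convexOn.locallyLipschitz.continuous

theorem Seminorm.exists_pos_mul_norm_le (p : Seminorm ℝ E) (hp : ∀ x, x ≠ 0 → 0 < p x) :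
    ∃ c > 0, ∀ x, c * ‖x‖ ≤ p x := by
  obtain ⟨c, hc, hcp⟩ := (isCompact_sphere (0 : E) 1).exists_forall_le'
    p.continuous_of_finiteDimensional.continuousOn
    (fun x hx ↦ hp x (ne_zero_of_mem_unit_sphere ⟨x, hx⟩))
  refine ⟨c, hc, fun x ↦ ?_⟩
  rcases eq_or_ne x 0 with rfl | hx
  · simp
  · have hx' : 0 < ‖x‖ := norm_pos_iff.mpr hx
    have := hcp (‖x‖⁻¹ • x) (by simp [norm_smul, hx'.ne'])
    rw [map_smul_eq_mul, norm_inv, norm_norm, inv_mul_eq_div, le_div_iff₀ hx'] at this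
    exact this

theorem Seminorm.isBounded_closedBall_of_pos (p : Seminorm ℝ E) (hp : ∀ x, x ≠ 0 → 0 < p x)
    (x : E) (r : ℝ) : Bornology.IsBounded (p.closedBall x r) := by
  obtain ⟨c, hc, hcp⟩ := p.exists_pos_mul_norm_le hp
  refine (Metric.isBounded_closedBall (x := x) (r := r / c)).subset fun y hy ↦ ?_
  rw [Seminorm.mem_closedBall] at hy
  rw [Metric.mem_closedBall, dist_eq_norm, le_div_iff₀ hc, mul_comm]
  exact (hcp _).trans hy

theorem Seminorm.exists_forall_le_of_isBounded (p : Seminorm ℝ E) {A : Set E}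
    (hA : Bornology.IsBounded A) : ∃ R, ∀ x ∈ A, p x ≤ R := by
  obtain ⟨C, hC, hpC⟩ := p.bound_of_continuous_normedSpace p.continuous_of_finiteDimensional
  obtain ⟨r, hr⟩ := hA.exists_norm_le
  exact ⟨C * r, fun x hx ↦ (hpC x).trans (mul_le_mul_of_nonneg_left (hr x hx) hC.le)⟩

theorem Seminorm.isBounded_seen_and_blocked (p : Seminorm ℝ E) (hp : ∀ x, x ≠ 0 → 0 < p x)
    (ℓ : E →ₗ[ℝ] ℝ) (hℓ : ∀ v, ℓ v ≤ p v) {δ δ' : ℝ} (hδ' : 0 < δ') (hδδ' : δ + δ' ≤ 1)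
    {A : Set E} (hA : Bornology.IsBounded A) :
    Bornology.IsBounded {x | (∃ y ∈ A, (1 - δ) * p (x - y) < ℓ (x - y)) ∧
      ¬ A ⊆ {z | (1 - (δ + δ')) * p (x - z) < ℓ (x - z)}} := by
  obtain ⟨R, hR⟩ := p.exists_forall_le_of_isBounded (hA.sub hA)
  refine (hA.add (p.isBounded_closedBall_of_pos hp 0 ((2 - (δ + δ')) * R / δ'))).subset ?_
  rintro x ⟨⟨y, hyA, hy⟩, hblocked⟩
  obtain ⟨z, hzA, hz⟩ := Set.not_subset.mp hblocked
  have hxy := p.mul_lt_of_seen_of_not_blocked ℓ hℓ hδδ' hy (not_lt.mp hz)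
  have hyz : p (y - z) ≤ R := hR _ (Set.sub_mem_sub hyA hzA)
  refine ⟨y, hyA, x - y, ?_, add_sub_cancel y x⟩
  rw [Seminorm.mem_closedBall, sub_zero, le_div_iff₀ hδ', mul_comm]
  nlinarith

end

theorem bounded_seen_and_blocked_general {d : ℕ}
    (ξ : (Fin d → ℝ) → ℝ)
    (hpos : ∀ x, x ≠ 0 → 0 < ξ x)
    (hhom : ∀ (c : ℝ) (x), ξ (c • x) = |c| * ξ x)
    (htri : ∀ x y, ξ (x + y) ≤ ξ x + ξ y)
    (t : Fin d → ℝ)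
    (ht : ∀ x, (∑ i, t i * x i) ≤ ξ x)
    (δ δ' : ℝ) (hδ' : 0 < δ') (hδδ' : δ + δ' < 1)
    (A : Set (Fin d → ℝ)) (hA : Bornology.IsBounded A) :
    Bornology.IsBounded {x : Fin d → ℝ |
      (∃ y ∈ A, (1 - δ) * ξ (x - y) < ∑ i, t i * (x - y) i) ∧
      ¬ (A ⊆ {z : Fin d → ℝ | (1 - (δ + δ')) * ξ (x - z) < ∑ i, t i * (x - z) i})} :=
  (Seminorm.of ξ htri hhom).isBounded_seen_and_blocked hpos (dotProductBilin ℝ ℝ t) ht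
    hδ' hδδ'.le hA

/-- Geometric lemma (Lemma B.2): let `ξ` be a norm on `ℝ^d`, `t` a point of the
boundary of the Wulff shape `K_ξ` (i.e. `(t,x) ≤ ξ(x)` for all `x`, with equality
for some `x ≠ 0`), and define the forward cone `Y^◁_δ = {x : (t,x) > (1-δ)ξ(x)}`
and the backward cone `Y^▶_δ = -Y^◁_δ`.  If `A ⊆ ℝ^d` is bounded and
`δ, δ' > 0` with `δ + δ' < 1`, then the set of `x` which are `δ`-seen by `A`
(i.e. `x ∈ y + Y^◁_δ` for some `y ∈ A`) and `(δ+δ')`-blocked by `A`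
(i.e. `A ⊄ x + Y^▶_{δ+δ'}`) is bounded. -/
theorem bounded_seen_and_blocked {d : ℕ}
    (ξ : (Fin d → ℝ) → ℝ)
    (hpos : ∀ x, x ≠ 0 → 0 < ξ x)
    (hhom : ∀ (c : ℝ) (x), ξ (c • x) = |c| * ξ x)
    (htri : ∀ x y, ξ (x + y) ≤ ξ x + ξ y)
    (t : Fin d → ℝ)
    (ht : ∀ x, (∑ i, t i * x i) ≤ ξ x)
    (ht' : ∃ x, x ≠ 0 ∧ (∑ i, t i * x i) = ξ x)
    (δ δ' : ℝ) (hδ : 0 < δ) (hδ' : 0 < δ') (hδδ' : δ + δ' < 1)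
    (A : Set (Fin d → ℝ)) (hA : Bornology.IsBounded A) :
    Bornology.IsBounded {x : Fin d → ℝ |
      (∃ y ∈ A, (1 - δ) * ξ (x - y) < ∑ i, t i * (x - y) i) ∧
      ¬ (A ⊆ {z : Fin d → ℝ | (1 - (δ + δ')) * ξ (x - z) < ∑ i, t i * (x - z) i})} :=
  bounded_seen_and_blocked_general ξ hpos hhom htri t ht δ δ' hδ' hδδ' A hA
end

section
/- Switching Lemma for random currents: Let G = (V_G, J) be a finite weighted graph, A, B ⊂ V_G sets of even cardinality, and F a function of currents. Then Σ_{∂n=A} Σ_{∂m=B} w(n)w(m) F(n+m) = Σ_{∂n=AΔB} Σ_{∂m=∅} w(n)w(m) F(n+m) 1[n+m ∈ E_B], where E_B is the event that in the multigraph induced by edges e with (n+m)_e > 0, every connected component contains an even number of vertices of B, and w(n) = Π_e J_e^{n_e}/n_e!. -/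
/-!
Write `w(n) w(m) = ∏ₑ C(nₑ + mₑ, nₑ) · w(n + m)` and read the binomial coefficients as choices:
the pairs `(n, m)` with `n + m = k`, counted with multiplicity `∏ₑ C(kₑ, nₑ)`, are the subsets `S`
of the multigraph with `kₑ` parallel copies of each edge `e`, where `n` counts the copies in `S`
and `m` those in `Sᶜ`. The sources of `n` and `m` become the mod-2 boundaries `∂S` and
`∂Sᶜ = ∂(all edges) ∆ ∂S`.

A vertex set `B` is a boundary exactly when every cluster meets it in an even number of points.
If so, choose `M` with `∂M = B`: the involution `S ↦ S ∆ M` exchanges the subsets with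
`∂S = A, ∂Sᶜ = B` and those with `∂S = A ∆ B, ∂Sᶜ = ∅`. If not, both sides are empty.
-/

open Finset Classical
open scoped symmDiff

noncomputable section

/-- The weight `w(n) = ∏_e J_e^{n_e}/n_e!` of a current `n`, as an extended real. -/
def curWeight {E : Type*} [Fintype E] (J : E → ℝ) (n : E → ℕ) : ENNReal :=
  ∏ e : E, ENNReal.ofReal (J e ^ n e / (Nat.factorial (n e)))

/-- The sources `∂n` of a current `n` on a graph with edge-endpoint map `ends`:
the vertices with odd total incident current. -/
def curSources {V E : Type*} [Fintype V] [Fintype E] [DecidableEq V]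
    (ends : E → Sym2 V) (n : E → ℕ) : Finset V :=
  Finset.univ.filter (fun v => Odd (∑ e : E, if v ∈ ends e then n e else 0))

/-- Connectivity of two vertices in the percolation configuration of edges carrying
positive current. -/
def connectedIn {V E : Type*} (ends : E → Sym2 V) (ω : E → ℕ) (u v : V) : Prop :=
  Relation.ReflTransGen (fun a b => ∃ e, 0 < ω e ∧ ends e = s(a, b)) u v

/-- The event `E_B`: every cluster of the configuration `ω` contains an even number
of vertices of `B`. -/
def evenClusters {V E : Type*} (ends : E → Sym2 V) (ω : E → ℕ) (B : Finset V) : Prop :=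
  ∀ v : V, Even {b ∈ (B : Set V) | connectedIn ends ω v b}.ncard

open scoped ENNReal Nat

lemma Finset.even_card_symmDiff_iff {α : Type*} [DecidableEq α] (s t : Finset α) :
    Even #(s ∆ t) ↔ (Even #s ↔ Even #t) := by
  have hsymm : #(s ∆ t) = #(s \ t) + #(t \ s) :=
    card_union_of_disjoint disjoint_sdiff_sdiff
  have hs := card_sdiff_add_card_inter s t
  have ht := card_sdiff_add_card_inter t s
  rw [inter_comm] at ht
  simp only [Nat.even_iff]
  omega

lemma Finset.filter_symmDiff {α : Type*} [DecidableEq α] (p : α → Prop) [DecidablePred p]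
    (s t : Finset α) : (s ∆ t).filter p = s.filter p ∆ t.filter p := by
  ext x
  simp only [mem_filter, mem_symmDiff]
  tauto

lemma ENNReal.sum_eq_tsum_tsum_card_mul {α β γ : Type*} [Fintype α] [DecidableEq β]
    [DecidableEq γ] (u : α → β) (v : α → γ) (G : β → γ → ℝ≥0∞) :
    ∑ a, G (u a) (v a) = ∑' b, ∑' c, (#{a | u a = b ∧ v a = c} : ℝ≥0∞) * G b c := by
  rw [← ENNReal.tsum_prod, sum_comp (fun p : β × γ => G p.1 p.2) fun a => (u a, v a),
    tsum_eq_sum (s := univ.image fun a => (u a, v a))]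
  · simp [Prod.ext_iff]
  · intro p hp
    simp_all [Prod.ext_iff]

lemma pow_div_factorial_mul_pow_div_factorial (x : ℝ) (n m : ℕ) :
    x ^ n / n ! * (x ^ m / m !) = (n + m).choose n * (x ^ (n + m) / (n + m)!) := by
  have h := Nat.add_choose_mul_factorial_mul_factorial m n
  rw [add_comm m n] at h
  have hc : ((n + m).choose n : ℝ) ≠ 0 := by exact_mod_cast (Nat.choose_pos (by omega)).ne'
  rw [pow_add, ← h]
  push_cast
  field_simp

section Clusters

variable {V X : Type*} {f : X → Sym2 V}

def Linked (f : X → Sym2 V) : V → V → Prop := Relation.ReflTransGen fun a b => ∃ x, f x = s(a, b)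

lemma Linked.symm {a b : V} (h : Linked f a b) : Linked f b a := by
  induction h with
  | refl => exact .refl
  | tail _ hbc ih =>
    obtain ⟨x, hx⟩ := hbc
    exact ih.head ⟨x, hx.trans Sym2.eq_swap⟩

def EvenOnClusters (f : X → Sym2 V) (B : Finset V) : Prop := ∀ v, Even #{b ∈ B | Linked f v b}

variable [DecidableEq V]

lemma EvenOnClusters.symmDiff {B C : Finset V} (hB : EvenOnClusters f B)
    (hC : EvenOnClusters f C) : EvenOnClusters f (B ∆ C) := fun v => by
  rw [filter_symmDiff, even_card_symmDiff_iff]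
  exact iff_of_true (hB v) (hC v)

lemma evenOnClusters_singleton_symmDiff {a b : V} (h : Linked f a b) :
    EvenOnClusters f ({a} ∆ {b}) := fun v => by
  by_cases hva : Linked f v a
  · have hvb : Linked f v b := hva.trans h
    rw [filter_symmDiff, even_card_symmDiff_iff]
    simp [filter_singleton, hva, hvb]
  · have hvb : ¬ Linked f v b := fun hvb => hva (hvb.trans h.symm)
    rw [filter_symmDiff]
    simp [filter_singleton, hva, hvb]

end Clusters

section Boundary

variable {V X : Type*} [Fintype V] [DecidableEq V] (f : X → Sym2 V)

def boundary (S : Finset X) : Finset V := {v | Odd #{x ∈ S | v ∈ f x}}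

lemma boundary_empty : boundary f ∅ = ∅ := by
  simp [boundary]

lemma boundary_symmDiff (S T : Finset X) :
    boundary f (S ∆ T) = boundary f S ∆ boundary f T := by
  ext v
  simp only [boundary, mem_filter, mem_univ, true_and, mem_symmDiff, filter_symmDiff,
    ← Nat.not_even_iff_odd, even_card_symmDiff_iff]
  tauto

lemma boundary_compl [Fintype X] (S : Finset X) :
    boundary f Sᶜ = boundary f univ ∆ boundary f S := by
  rw [← boundary_symmDiff, ← top_eq_univ, top_symmDiff, hnot_eq_compl]

lemma boundary_singleton {x : X} {a b : V} (hab : a ≠ b) (hx : f x = s(a, b)) :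
    boundary f {x} = {a} ∆ {b} := by
  ext v
  by_cases hva : v = a <;> by_cases hvb : v = b <;>
    simp_all [boundary, filter_singleton, mem_symmDiff]

variable {f} (hf : ∀ x, ¬ (f x).IsDiag)
include hf

lemma evenOnClusters_boundary (S : Finset X) : EvenOnClusters f (boundary f S) := by
  induction S using Finset.induction_on with
  | empty => simp [boundary_empty, EvenOnClusters]
  | insert x S hx ih =>
    obtain ⟨⟨a, b⟩, hab⟩ := Quot.exists_rep (f x)
    have hxab : f x = s(a, b) := hab.symm
    have hne : a ≠ b := fun h => hf x (by rw [hxab, h]; exact Sym2.mk_isDiag_iff.mpr rfl)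
    rw [insert_eq, union_comm, ← symmDiff_eq_union (disjoint_singleton_right.mpr hx),
      boundary_symmDiff, boundary_singleton f hne hxab]
    exact ih.symmDiff (evenOnClusters_singleton_symmDiff (.single ⟨x, hxab⟩))

lemma exists_boundary_eq_singleton_symmDiff {u v : V} (h : Linked f u v) :
    ∃ P : Finset X, boundary f P = {u} ∆ {v} := by
  induction h with
  | refl => exact ⟨∅, by rw [boundary_empty, symmDiff_self, bot_eq_empty]⟩
  | @tail b c _ hbc ih =>
    obtain ⟨P, hP⟩ := ih
    obtain ⟨x, hx⟩ := hbc
    have hne : b ≠ c := fun h => hf x (by rw [hx, h]; exact Sym2.mk_isDiag_iff.mpr rfl)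
    refine ⟨P ∆ {x}, ?_⟩
    rw [boundary_symmDiff, hP, boundary_singleton f hne hx, symmDiff_assoc,
      symmDiff_symmDiff_cancel_left]

lemma exists_boundary_eq {B : Finset V} (hB : EvenOnClusters f B) :
    ∃ S : Finset X, boundary f S = B := by
  induction B using Finset.strongInduction with
  | H B ih =>
    obtain rfl | ⟨b, hb⟩ := B.eq_empty_or_nonempty
    · exact ⟨∅, boundary_empty f⟩
    obtain ⟨c, hc, hcb⟩ : ∃ c ∈ {x ∈ B | Linked f b x}, c ≠ b := by
      refine exists_mem_ne ?_ b
      have hb' : b ∈ {x ∈ B | Linked f b x} := mem_filter.mpr ⟨hb, .refl⟩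
      obtain ⟨r, hr⟩ := hB b
      have := card_pos.mpr ⟨b, hb'⟩
      omega
    obtain ⟨hcB, hbc⟩ := mem_filter.mp hc
    obtain ⟨P, hP⟩ := exists_boundary_eq_singleton_symmDiff hf hbc
    have hsub : B ∆ ({b} ∆ {c}) ⊂ B := by
      refine ssubset_iff_of_subset ?_ |>.mpr ⟨b, hb, ?_⟩
      · intro x
        simp only [mem_symmDiff, mem_singleton]
        rintro (⟨hx, -⟩ | ⟨⟨rfl, -⟩ | ⟨rfl, -⟩, -⟩) <;> assumption
      · simp [mem_symmDiff, hb, hcb.symm]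
    obtain ⟨S, hS⟩ := ih _ hsub (hB.symmDiff (evenOnClusters_singleton_symmDiff hbc))
    exact ⟨S ∆ P, by rw [boundary_symmDiff, hS, hP, symmDiff_symmDiff_cancel_right]⟩

theorem card_filter_boundary_switching [Fintype X] (A B : Finset V) :
    #{S : Finset X | boundary f S = A ∧ boundary f Sᶜ = B}
      = #{S : Finset X | boundary f S = A ∆ B ∧ boundary f Sᶜ = ∅ ∧ EvenOnClusters f B} := by
  by_cases hB : EvenOnClusters f B
  · obtain ⟨M, hM⟩ := exists_boundary_eq hf hB
    refine card_nbij' (· ∆ M) (· ∆ M) ?_ ?_ (fun S _ => symmDiff_symmDiff_cancel_right M S)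
      (fun S _ => symmDiff_symmDiff_cancel_right M S)
    all_goals
      intro S
      simp only [coe_filter, mem_univ, true_and, Set.mem_ofPred_eq, boundary_compl,
        boundary_symmDiff, hM]
    · rintro ⟨hSA, hSB⟩
      refine ⟨by rw [hSA], ?_, hB⟩
      rw [← symmDiff_assoc, hSB, symmDiff_self, bot_eq_empty]
    · rintro ⟨hSAB, hS, -⟩
      refine ⟨by rw [hSAB, symmDiff_symmDiff_cancel_right], ?_⟩
      rw [← symmDiff_assoc, hS, ← bot_eq_empty, bot_symmDiff]
  · have hLHS : ∀ S : Finset X, ¬ (boundary f S = A ∧ boundary f Sᶜ = B) :=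
      fun S h => hB (h.2 ▸ evenOnClusters_boundary hf Sᶜ)
    simp [hLHS, hB]

end Boundary

section MultiEdge

variable {E V : Type*}

abbrev MultiEdge (k : E → ℕ) : Type _ := Σ e : E, Fin (k e)

def copyCount {k : E → ℕ} (S : Finset (MultiEdge k)) (e : E) : ℕ := #{i : Fin (k e) | ⟨e, i⟩ ∈ S}

variable (ends : E → Sym2 V)

lemma connectedIn_eq_linked (k : E → ℕ) :
    connectedIn ends k = Linked fun x : MultiEdge k => ends x.1 := by
  have : (fun a b => ∃ e, 0 < k e ∧ ends e = s(a, b)) =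
      fun a b => ∃ x : MultiEdge k, ends x.1 = s(a, b) := by
    ext a b
    exact ⟨fun ⟨e, he, h⟩ => ⟨⟨e, ⟨0, he⟩⟩, h⟩, fun ⟨⟨e, i⟩, h⟩ => ⟨e, i.pos, h⟩⟩
  ext u v
  rw [connectedIn, this]
  rfl

lemma evenClusters_iff_evenOnClusters (k : E → ℕ) (B : Finset V) :
    evenClusters ends k B ↔ EvenOnClusters (fun x : MultiEdge k => ends x.1) B := by
  refine forall_congr' fun v => ?_
  rw [← connectedIn_eq_linked, ← Set.ncard_coe_finset, coe_filter]
  rfl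

variable [Fintype E] {k : E → ℕ}

lemma copyCount_add_copyCount_compl (S : Finset (MultiEdge k)) :
    copyCount S + copyCount Sᶜ = k := by
  funext e
  simp only [Pi.add_apply, copyCount, mem_compl]
  rw [card_filter_add_card_filter_not, card_univ, Fintype.card_fin]

lemma card_filter_copyCount_eq (n : E → ℕ) :
    #{S : Finset (MultiEdge k) | copyCount S = n} = ∏ e, (k e).choose (n e) := by
  let components : Finset (MultiEdge k) ≃ ∀ e, Finset (Fin (k e)) :=
    { toFun S e := {i | ⟨e, i⟩ ∈ S}
      invFun T := univ.sigma T
      left_inv S := by ext ⟨e, i⟩; simp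
      right_inv T := by funext e; ext i; simp }
  let fibers : {S : Finset (MultiEdge k) // copyCount S = n} ≃
      ∀ e, {t : Finset (Fin (k e)) // #t = n e} :=
    (components.subtypeEquiv fun S => funext_iff).trans
      (Equiv.subtypePiEquivPi (p := fun e (t : Finset (Fin (k e))) => #t = n e))
  rw [← Fintype.card_subtype, Fintype.card_congr fibers, Fintype.card_pi]
  simp

variable [Fintype V] [DecidableEq V]

lemma curSources_copyCount (S : Finset (MultiEdge k)) :
    curSources ends (copyCount S) = boundary (fun x : MultiEdge k => ends x.1) S := by
  have hS : S = univ.sigma fun e => {i : Fin (k e) | ⟨e, i⟩ ∈ S} := by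
    ext ⟨e, i⟩
    simp
  ext v
  simp only [curSources, boundary, mem_filter, mem_univ, true_and]
  rw [card_filter, hS, sum_sigma]
  simp [copyCount, apply_ite card]

end MultiEdge

section Currents

variable {E : Type*} [Fintype E] {J : E → ℝ}

lemma curWeight_mul (hJ : ∀ e, 0 ≤ J e) (n m : E → ℕ) :
    curWeight J n * curWeight J m
      = (∏ e, ((n e + m e).choose (n e) : ℝ≥0∞)) * curWeight J (n + m) := by
  simp only [curWeight, ← prod_mul_distrib]
  refine prod_congr rfl fun e _ => ?_
  rw [← ENNReal.ofReal_mul (by have := hJ e; positivity), pow_div_factorial_mul_pow_div_factorial,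
    ENNReal.ofReal_mul (by positivity), ENNReal.ofReal_natCast, Pi.add_apply]

lemma card_filter_copyCount_eq_and_copyCount_compl_eq (n m : E → ℕ) :
    #{S : Finset (MultiEdge (n + m)) | copyCount S = n ∧ copyCount Sᶜ = m}
      = ∏ e, (n e + m e).choose (n e) := by
  rw [← card_filter_copyCount_eq]
  congr 1
  refine filter_congr fun S _ => and_iff_left_of_imp fun hS => ?_
  have := copyCount_add_copyCount_compl S
  rw [hS] at this
  exact add_left_cancel this

theorem tsum_tsum_choose_mul_eq (G : (E → ℕ) → (E → ℕ) → ℝ≥0∞) :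
    ∑' n, ∑' m, (∏ e, ((n e + m e).choose (n e) : ℝ≥0∞)) * G n m
      = ∑' k, ∑ S : Finset (MultiEdge k), G (copyCount S) (copyCount Sᶜ) := by
  simp_rw [ENNReal.sum_eq_tsum_tsum_card_mul]
  symm
  rw [ENNReal.tsum_comm]
  refine tsum_congr fun n => ?_
  rw [ENNReal.tsum_comm]
  refine tsum_congr fun m => ?_
  rw [tsum_eq_single (n + m), card_filter_copyCount_eq_and_copyCount_compl_eq]
  · push_cast
    rfl
  · intro k hk
    suffices #{S : Finset (MultiEdge k) | copyCount S = n ∧ copyCount Sᶜ = m} = 0 by simp [this]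
    refine card_eq_zero.mpr (filter_eq_empty_iff.mpr fun S _ ⟨hn, hm⟩ => hk ?_)
    rw [← copyCount_add_copyCount_compl S, hn, hm]

theorem tsum_tsum_ite_curWeight_mul (hJ : ∀ e, 0 ≤ J e) (P : (E → ℕ) → (E → ℕ) → Prop)
    [DecidableRel P] (F : (E → ℕ) → ℝ≥0∞) :
    ∑' n, ∑' m, (if P n m then curWeight J n * curWeight J m * F (n + m) else 0)
      = ∑' k, #{S : Finset (MultiEdge k) | P (copyCount S) (copyCount Sᶜ)}
          * (curWeight J k * F k) := by
  have hsplit : ∀ n m, (if P n m then curWeight J n * curWeight J m * F (n + m) else 0)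
      = (∏ e, ((n e + m e).choose (n e) : ℝ≥0∞))
          * if P n m then curWeight J (n + m) * F (n + m) else 0 := fun n m => by
    rw [curWeight_mul hJ, mul_assoc, mul_ite, mul_zero]
  simp_rw [hsplit, tsum_tsum_choose_mul_eq, copyCount_add_copyCount_compl]
  refine tsum_congr fun k => ?_
  rw [sum_ite, sum_const_zero, add_zero, sum_const, nsmul_eq_mul]

end Currents

theorem switching_lemma_general {V E : Type*} [Fintype V] [Fintype E] [DecidableEq V]
    (ends : E → Sym2 V) (hnd : ∀ e, ¬ (ends e).IsDiag)
    (J : E → ℝ) (hJ : ∀ e, 0 ≤ J e)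
    (A B : Finset V)
    (F : (E → ℕ) → ENNReal) :
    (∑' n : E → ℕ, ∑' m : E → ℕ,
        (if curSources ends n = A ∧ curSources ends m = B then
          curWeight J n * curWeight J m * F (n + m) else 0))
      = ∑' n : E → ℕ, ∑' m : E → ℕ,
        (if curSources ends n = A ∆ B ∧ curSources ends m = ∅ ∧
            evenClusters ends (n + m) B then
          curWeight J n * curWeight J m * F (n + m) else 0) := by
  rw [tsum_tsum_ite_curWeight_mul hJ, tsum_tsum_ite_curWeight_mul hJ]
  refine tsum_congr fun k => ?_
  simp only [copyCount_add_copyCount_compl, curSources_copyCount, evenClusters_iff_evenOnClusters]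
  congr 2
  convert card_filter_boundary_switching (fun x : MultiEdge k => hnd x.1) A B

/-- The Switching Lemma for random currents:
`Σ_{∂n=A} Σ_{∂m=B} w(n)w(m)F(n+m)
  = Σ_{∂n=AΔB} Σ_{∂m=∅} w(n)w(m)F(n+m) 1[n+m ∈ E_B]`. -/
theorem switching_lemma {V E : Type*} [Fintype V] [Fintype E] [DecidableEq V]
    (ends : E → Sym2 V) (hnd : ∀ e, ¬ (ends e).IsDiag)
    (J : E → ℝ) (hJ : ∀ e, 0 ≤ J e)
    (A B : Finset V) (hA : Even A.card) (hB : Even B.card)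
    (F : (E → ℕ) → ENNReal) :
    (∑' n : E → ℕ, ∑' m : E → ℕ,
        (if curSources ends n = A ∧ curSources ends m = B then
          curWeight J n * curWeight J m * F (n + m) else 0))
      = ∑' n : E → ℕ, ∑' m : E → ℕ,
        (if curSources ends n = A ∆ B ∧ curSources ends m = ∅ ∧
            evenClusters ends (n + m) B then
          curWeight J n * curWeight J m * F (n + m) else 0) :=
  switching_lemma_general ends hnd J hJ A B F
end
end

section
/- Insertion tolerance for random currents: Let G be a finite weighted graph, e ∈ E_G with weight J_e > 0, and A ⊂ V_G. Then uniformly over the values n_f for f ≠ e, the random current measure P^A_G satisfies P^A_G(n_e > 0, n_f = n_f' ∀f ≠ e) ≥ c(J_e) · P^A_G(n_f = n_f' ∀f ≠ e), where c(J_e) = (cosh(J_e) - 1)/cosh(J_e). -/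
open Finset Classical

noncomputable section

/-!
Conditionally on the current off `e`, the event `∂n = A` depends only on the parity of `n_e`,
and the two parities give different sources. If the parity forced by `A` is odd, `n_e > 0`
automatically and `c(J_e) ≤ 1` suffices. If it is even, the weight of `n_e = k` is proportional
to `J_e^k / k!`, whose sum over even `k` is `cosh J_e` and over positive even `k` is
`cosh J_e - 1 = c(J_e) cosh J_e`.
-/

open scoped ENNReal

section Currents

variable {V E : Type*} [Fintype V] [Fintype E] [DecidableEq V] [DecidableEq E]
  (ends : E → Sym2 V) (n : E → ℕ) (e : E)

theorem mem_curSources_update_iff (k : ℕ) (v : V) :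
    v ∈ curSources ends (Function.update n e k) ↔
      Odd ((if v ∈ ends e then k else 0) +
        ∑ f ∈ ({e}ᶜ : Finset E), if v ∈ ends f then n f else 0) := by
  simp only [curSources, mem_filter, mem_univ, true_and]
  rw [Fintype.sum_eq_add_sum_compl e, Function.update_self]
  congr! 3 with f hf
  rw [Function.update_of_ne (by simpa using hf)]

theorem curSources_update_mod_two (k : ℕ) :
    curSources ends (Function.update n e k) = curSources ends (Function.update n e (k % 2)) := by
  ext v
  simp only [mem_curSources_update_iff]
  split_ifs <;> simp [Nat.odd_iff]

theorem curSources_update_zero_ne_one :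
    curSources ends (Function.update n e 0) ≠ curSources ends (Function.update n e 1) := by
  intro h
  have := Finset.ext_iff.1 h (ends e).out.1
  simp only [mem_curSources_update_iff, if_pos (ends e).out_fst_mem] at this
  rw [zero_add, add_comm, Nat.odd_add_one] at this
  exact iff_not_self this

theorem curWeight_update (J : E → ℝ) (k : ℕ) :
    curWeight J (Function.update n e k) = ENNReal.ofReal (J e ^ k / k.factorial) *
      ∏ f ∈ ({e}ᶜ : Finset E), ENNReal.ofReal (J f ^ n f / (n f).factorial) := by
  rw [curWeight, Fintype.prod_eq_mul_prod_compl e, Function.update_self]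
  congr! 2 with f hf
  rw [Function.update_of_ne (by simpa using hf)]

end Currents

theorem tsum_ite_even_ofReal_pow_div_factorial (x : ℝ) :
    ∑' k : ℕ, (if Even k then ENNReal.ofReal (x ^ k / k.factorial) else 0) =
      ENNReal.ofReal (Real.cosh x) := by
  rw [← tsum_even_add_odd ENNReal.summable ENNReal.summable]
  simp only [even_two_mul, if_true, Nat.not_even_bit1, if_false, tsum_zero, add_zero]
  rw [← ENNReal.ofReal_tsum_of_nonneg (fun k => by rw [pow_mul]; positivity)
    (Real.hasSum_cosh x).summable, (Real.hasSum_cosh x).tsum_eq]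

theorem tsum_ite_pos_even_ofReal_pow_div_factorial (x : ℝ) :
    ∑' k : ℕ, (if 0 < k ∧ Even k then ENNReal.ofReal (x ^ k / k.factorial) else 0) =
      ENNReal.ofReal (Real.cosh x - 1) := by
  have h := tsum_ite_even_ofReal_pow_div_factorial x
  rw [ENNReal.tsum_eq_add_tsum_ite 0] at h
  rw [ENNReal.ofReal_sub _ zero_le_one, ENNReal.ofReal_one, ← h]
  simp only [Even.zero, if_true, pow_zero, Nat.factorial_zero, Nat.cast_one, div_one,
    ENNReal.ofReal_one]
  rw [ENNReal.add_sub_cancel_left ENNReal.one_ne_top]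
  congr! 2 with k
  by_cases hk : k = 0 <;> simp [hk, Nat.pos_iff_ne_zero]

theorem mul_tsum_ite_le_tsum_ite_pos_of_parity {c : ℝ≥0∞} {a : ℕ → ℝ≥0∞} {P : ℕ → Prop}
    [DecidablePred P] (hP : ∀ k, P k ↔ P (k % 2)) (hP01 : ¬(P 0 ∧ P 1)) (hc : c ≤ 1)
    (heven : c * ∑' k, (if Even k then a k else 0) ≤ ∑' k, if 0 < k ∧ Even k then a k else 0) :
    c * ∑' k, (if P k then a k else 0) ≤ ∑' k, if 0 < k ∧ P k then a k else 0 := by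
  by_cases h0 : P 0
  · have hPeven : ∀ k, P k ↔ Even k := fun k => by
      rw [hP, Nat.even_iff]
      rcases Nat.mod_two_eq_zero_or_one k with hk | hk <;> simp only [hk, h0]
      simpa using fun h1 => hP01 ⟨h0, h1⟩
    simpa only [hPeven] using heven
  · have hpos : ∀ k, P k → 0 < k := fun k hk => Nat.pos_of_ne_zero (by rintro rfl; exact h0 hk)
    calc c * ∑' k, (if P k then a k else 0)
        ≤ ∑' k, (if P k then a k else 0) := mul_le_of_le_one_left zero_le hc
      _ = ∑' k, if 0 < k ∧ P k then a k else 0 :=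
          tsum_congr fun k => if_congr ⟨fun hk => ⟨hpos k hk, hk⟩, And.right⟩ rfl rfl

theorem insertion_tolerance_general {V E : Type*} [Fintype V] [Fintype E]
    [DecidableEq V] [DecidableEq E]
    (ends : E → Sym2 V) (J : E → ℝ)
    (e : E) (A : Finset V) (n' : E → ℕ) :
    ENNReal.ofReal ((Real.cosh (J e) - 1) / Real.cosh (J e)) *
        (∑' k : ℕ, if curSources ends (Function.update n' e k) = A then
          curWeight J (Function.update n' e k) else 0)
      ≤ ∑' k : ℕ, if 0 < k ∧ curSources ends (Function.update n' e k) = A then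
          curWeight J (Function.update n' e k) else 0 := by
  have hcosh : 0 < Real.cosh (J e) := Real.cosh_pos (J e)
  refine mul_tsum_ite_le_tsum_ite_pos_of_parity
    (fun k => by rw [curSources_update_mod_two ends n' e k])
    (fun h => curSources_update_zero_ne_one ends n' e (h.1.trans h.2.symm))
    (ENNReal.ofReal_le_one.2 <| (div_le_one hcosh).2 <| by linarith) ?_
  simp only [curWeight_update, ← ite_zero_mul, ENNReal.tsum_mul_right,
    tsum_ite_even_ofReal_pow_div_factorial, tsum_ite_pos_even_ofReal_pow_div_factorial]
  rw [← mul_assoc, ← ENNReal.ofReal_mul (div_nonneg (by linarith [Real.one_le_cosh (J e)])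
    hcosh.le), div_mul_cancel₀ _ hcosh.ne']

/-- Insertion tolerance for random currents: uniformly over the values `n'` of the
current on the edges `f ≠ e`, the conditional weight of `{n_e > 0}` under the random
current measure with sources `A` is at least `c(J_e) = (cosh J_e - 1)/cosh J_e`.
Equivalently, in unnormalized form:
`Σ_{k>0, ∂n=A} w(n) ≥ c(J_e) Σ_{k≥0, ∂n=A} w(n)` where `n = n'` off `e` and `n_e = k`. -/
theorem insertion_tolerance {V E : Type*} [Fintype V] [Fintype E]
    [DecidableEq V] [DecidableEq E]
    (ends : E → Sym2 V) (J : E → ℝ) (hJ : ∀ f, 0 ≤ J f)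
    (e : E) (hJe : 0 < J e) (A : Finset V) (n' : E → ℕ) :
    ENNReal.ofReal ((Real.cosh (J e) - 1) / Real.cosh (J e)) *
        (∑' k : ℕ, if curSources ends (Function.update n' e k) = A then
          curWeight J (Function.update n' e k) else 0)
      ≤ ∑' k : ℕ, if 0 < k ∧ curSources ends (Function.update n' e k) = A then
          curWeight J (Function.update n' e k) else 0 :=
  insertion_tolerance_general ends J e A n'
end
end

section
/- Random current representation of correlations: for a finite graph G with couplings J and field h, appending a ghost vertex g coupled to each vertex with strength h, one has for any A ⊂ V_G of even cardinality: ⟨σ_A⟩_G = Z_{G_g}(A)/Z_{G_g}(∅), and for A of odd cardinality ⟨σ_A⟩_G = Z_{G_g}(A ∪ {g})/Z_{G_g}(∅), where Z_{G_g}(S) = Σ_{∂n = S} Π_{e} (J̃_e)^{n_e}/n_e! is the partition function of currents on the augmented graph G_g with sources S. -/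
/-!
Expand `exp (J̃_ab σ_a σ_b) = ∑ₖ (J̃_ab σ_a σ_b)^k / k!` on every edge of the augmented graph.
A current `n` then contributes `w(n) ∏_a σ_a ^ (deg_n a)`, and multiplying by `σ_S` and summing
over all spins leaves `2^|V(G_g)| w(n)` if the odd-degree vertices of `n` are exactly `S`, and `0`
otherwise. This gives `∑_σ σ_S e^{H(σ)} = 2^|V(G_g)| Z_{G_g}(S)` for the field-free Ising model
on `G_g`. When `|S|` is even the summand is invariant under the global spin flip, so the sum is
twice the sum with the ghost spin pinned to `+1`, which is the Ising model on `G` in field `h`;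
if `|A|` is odd, adding the ghost to the sources makes `|S|` even without changing `σ_S`.
-/

open Finset Classical

noncomputable section

/-- The couplings of the augmented graph `G_g`: the ghost `⊥` is coupled to every
vertex with strength `h`, and the other couplings are given by `J`. -/
def Jaug {V : Type*} (J : V → V → ℝ) (h : ℝ) (a b : WithBot V) : ℝ :=
  WithBot.recBotCoe (WithBot.recBotCoe (0 : ℝ) (fun _ => h) b)
    (fun i => WithBot.recBotCoe h (fun j => J i j) b) a

/-- The space of currents on the augmented graph: symmetric, loopless
`ℕ`-valued functions on pairs of vertices of `G_g`. -/
def CurSpace (W : Type*) : Type _ :=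
  {n : W → W → ℕ // (∀ a b, n a b = n b a) ∧ ∀ a, n a a = 0}

instance instFintypeWithBotAug {V : Type*} [Fintype V] : Fintype (WithBot V) :=
  inferInstanceAs (Fintype (Option V))

/-- The weight `w(n) = ∏_{e} (J̃_e)^{n_e}/n_e!` of a current on the augmented
graph (product over unordered pairs, via `a < b`). -/
def curW {V : Type*} [Fintype V] [LinearOrder V] (J : V → V → ℝ) (h : ℝ)
    (n : WithBot V → WithBot V → ℕ) : ℝ :=
  ∏ a : WithBot V, ∏ b : WithBot V,
    if a < b then Jaug J h a b ^ n a b / (Nat.factorial (n a b)) else 1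

/-- The sources of a current on the augmented graph. -/
def curSrc {V : Type*} [Fintype V] [LinearOrder V]
    (n : WithBot V → WithBot V → ℕ) : Finset (WithBot V) :=
  Finset.univ.filter (fun v => Odd (∑ u : WithBot V, n v u))

/-- The partition function `Z_{G_g}(S)` of random currents on the augmented graph
with sources `S`. -/
def Zcur {V : Type*} [Fintype V] [LinearOrder V] (J : V → V → ℝ) (h : ℝ)
    (S : Finset (WithBot V)) : ℝ :=
  ∑' n : CurSpace (WithBot V), if curSrc n.1 = S then curW J h n.1 else 0


section ProdTsum

variable {ι κ R : Type*} [NormedCommRing R] [CompleteSpace R]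

theorem summable_norm_and_hasSum_prod_fin : ∀ (n : ℕ) (f : Fin n → κ → R),
    (∀ i, Summable fun k => ‖f i k‖) →
      (Summable fun g : Fin n → κ => ‖∏ i, f i (g i)‖) ∧
        HasSum (fun g : Fin n → κ => ∏ i, f i (g i)) (∏ i, ∑' k, f i k)
  | 0, f, _ => ⟨.of_finite, by simp⟩
  | n + 1, f, hf => by
    obtain ⟨ihS, ihT⟩ :=
      summable_norm_and_hasSum_prod_fin n (fun i => f i.succ) (fun i => hf i.succ)
    let e := Fin.consEquiv fun _ : Fin (n + 1) => κ
    have hcons : ∀ p : κ × (Fin n → κ),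
        ∏ i, f i (e p i) = f 0 p.1 * ∏ i, f i.succ (p.2 i) := fun p => by
      simp [e, Fin.prod_univ_succ, Fin.consEquiv]
    refine ⟨e.summable_iff.mp ?_, e.hasSum_iff.mp ?_⟩
    · simpa only [Function.comp_def, hcons] using (hf 0).mul_norm ihS
    · rw [Fin.prod_univ_succ, ← ihT.tsum_eq, tsum_mul_tsum_of_summable_norm (hf 0) ihS]
      simpa only [Function.comp_def, hcons] using (summable_mul_of_summable_norm (hf 0) ihS).hasSum

theorem hasSum_prod_of_summable_norm [Fintype ι] {f : ι → κ → R}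
    (hf : ∀ i, Summable fun k => ‖f i k‖) :
    HasSum (fun g : ι → κ => ∏ i, f i (g i)) (∏ i, ∑' k, f i k) := by
  let e := Fintype.equivFin ι
  have hfin := (summable_norm_and_hasSum_prod_fin _ (fun j => f (e.symm j)) fun j => hf _).2
  rw [Equiv.prod_comp e.symm (fun i => ∑' k, f i k)] at hfin
  refine ((e.arrowCongr (Equiv.refl κ)).hasSum_iff.mpr hfin).congr_fun fun g => ?_
  simp [Equiv.arrowCongr_apply, Equiv.prod_comp e.symm (fun i => f i (g i))]

end ProdTsum

theorem summable_norm_pow_div_factorial (x : ℝ) :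
    Summable fun k : ℕ => ‖x ^ k / (Nat.factorial k)‖ := by
  simpa [abs_div] using Real.summable_pow_div_factorial |x|

theorem Real.exp_eq_tsum_pow_div_factorial (x : ℝ) :
    Real.exp x = ∑' k : ℕ, x ^ k / (Nat.factorial k) := by
  rw [Real.exp_eq_exp_ℝ, NormedSpace.exp_eq_tsum_div]

theorem spin_true : spin true = 1 := rfl

theorem spin_not (b : Bool) : spin (!b) = -spin b := by
  cases b <;> simp [spin]

theorem prod_spin_not {W : Type*} (S : Finset W) (τ : W → Bool) :
    ∏ a ∈ S, spin (!τ a) = (-1) ^ S.card * ∏ a ∈ S, spin (τ a) := by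
  simp only [spin_not, prod_neg]

theorem sum_spin_pow (k : ℕ) : ∑ b : Bool, spin b ^ k = if Even k then 2 else 0 := by
  rcases Nat.even_or_odd k with hk | hk
  · simp [spin, hk, hk.neg_one_pow, one_add_one_eq_two]
  · simp [spin, hk.neg_one_pow, Nat.not_even_iff_odd.mpr hk]

theorem sum_prod_spin_pow {W : Type*} [Fintype W] [DecidableEq W] (k : W → ℕ) :
    ∑ τ : W → Bool, ∏ a, spin (τ a) ^ k a = if ∀ a, Even (k a) then 2 ^ Fintype.card W else 0 := by
  rw [← Fintype.prod_sum fun a b => spin b ^ k a]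
  simp only [sum_spin_pow, Fintype.prod_ite_zero, prod_const, card_univ]

section Currents

variable {W : Type*} [Fintype W] [LinearOrder W]

def edgeEnergy (K : W → W → ℝ) (τ : W → Bool) : ℝ :=
  ∑ a, ∑ b, if a < b then K a b * spin (τ a) * spin (τ b) else 0

def currentWeight (K : W → W → ℝ) (n : W → W → ℕ) : ℝ :=
  ∏ a, ∏ b, if a < b then K a b ^ n a b / (Nat.factorial (n a b)) else 1

def currentSources (n : W → W → ℕ) : Finset W :=
  univ.filter fun v => Odd (∑ u, n v u)

def currentPartition (K : W → W → ℝ) (S : Finset W) : ℝ :=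
  ∑' n : CurSpace W, if currentSources n.1 = S then currentWeight K n.1 else 0

variable (W) in
abbrev Edges : Type _ := {p : W × W // p.1 < p.2}

theorem edgeEnergy_not (K : W → W → ℝ) (τ : W → Bool) :
    edgeEnergy K (fun a => !τ a) = edgeEnergy K τ := by
  simp only [edgeEnergy, spin_not, mul_neg, neg_mul, neg_neg]

@[to_additive]
theorem prod_ite_lt_eq_prod_edges {M : Type*} [CommMonoid M] (F : W → W → M) :
    ∏ a, ∏ b, (if a < b then F a b else 1) = ∏ e : Edges W, F e.1.1 e.1.2 := by
  rw [← Fintype.prod_prod_type', ← prod_filter]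
  exact prod_subtype _ (by simp) _

theorem prod_prod_eq_prod_ite_lt_mul_swap {M : Type*} [CommMonoid M] (F : W → W → M)
    (hF : ∀ a, F a a = 1) :
    ∏ a, ∏ b, F a b = ∏ a, ∏ b, if a < b then F a b * F b a else 1 := by
  have hsplit : ∀ a b, F a b = (if a < b then F a b else 1) * (if b < a then F a b else 1) := by
    intro a b
    rcases lt_trichotomy a b with hab | rfl | hab
    · simp [hab, hab.not_gt]
    · simp [hF]
    · simp [hab, hab.not_gt]
  calc ∏ a, ∏ b, F a b
      = (∏ a, ∏ b, if a < b then F a b else 1) * ∏ a, ∏ b, if b < a then F a b else 1 := by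
        simp only [← prod_mul_distrib, ← hsplit]
    _ = (∏ a, ∏ b, if a < b then F a b else 1) * ∏ a, ∏ b, if a < b then F b a else 1 := by
        rw [prod_comm (f := fun a b => if b < a then F a b else 1)]
    _ = ∏ a, ∏ b, if a < b then F a b * F b a else 1 := by
        simp only [← prod_mul_distrib, ite_mul_ite, mul_one]

def curSpaceEquiv : CurSpace W ≃ (Edges W → ℕ) where
  toFun n e := n.1 e.1.1 e.1.2
  invFun m := ⟨fun a b =>
      if hab : a < b then m ⟨(a, b), hab⟩ else if hba : b < a then m ⟨(b, a), hba⟩ else 0,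
    fun a b => by grind, fun a => by simp⟩
  left_inv n := by
    obtain ⟨n, hsymm, hloop⟩ := n
    refine Subtype.ext (funext₂ fun a b => ?_)
    rcases lt_trichotomy a b with hab | rfl | hab
    · simp [hab]
    · simp [hloop]
    · simp [hab, hab.not_gt, hsymm a b]
  right_inv m := funext fun e => dif_pos e.2

theorem hasSum_exp_edgeEnergy (K : W → W → ℝ) (τ : W → Bool) :
    HasSum (fun m : Edges W → ℕ => ∏ e : Edges W,
        (K e.1.1 e.1.2 * spin (τ e.1.1) * spin (τ e.1.2)) ^ m e / (Nat.factorial (m e)))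
      (Real.exp (edgeEnergy K τ)) := by
  have := hasSum_prod_of_summable_norm fun e : Edges W =>
    summable_norm_pow_div_factorial (K e.1.1 e.1.2 * spin (τ e.1.1) * spin (τ e.1.2))
  rw [edgeEnergy, sum_ite_lt_eq_sum_edges, Real.exp_sum]
  simpa only [Real.exp_eq_tsum_pow_div_factorial] using this

theorem prod_ite_lt_pow_div_factorial_eq {n : W → W → ℕ} (hsymm : ∀ a b, n a b = n b a)
    (hloop : ∀ a, n a a = 0) (K : W → W → ℝ) (s : W → ℝ) :
    ∏ a, ∏ b, (if a < b then (K a b * s a * s b) ^ n a b / (Nat.factorial (n a b)) else 1)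
      = currentWeight K n * ∏ a, s a ^ ∑ b, n a b := by
  have hdegree : ∏ a, s a ^ ∑ b, n a b
      = ∏ a, ∏ b, if a < b then s a ^ n a b * s b ^ n b a else 1 := by
    simp only [← prod_pow_eq_pow_sum]
    exact prod_prod_eq_prod_ite_lt_mul_swap _ fun a => by simp [hloop]
  rw [hdegree, currentWeight, ← prod_mul_distrib]
  refine prod_congr rfl fun a _ => ?_
  rw [← prod_mul_distrib]
  refine prod_congr rfl fun b _ => ?_
  split_ifs
  · rw [hsymm b a, mul_pow, mul_pow]
    ring
  · simp

theorem forall_even_iff_currentSources_eq (n : W → W → ℕ) (S : Finset W) :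
    (∀ a, Even ((if a ∈ S then 1 else 0) + ∑ b, n a b)) ↔ currentSources n = S := by
  simp only [Finset.ext_iff, currentSources, mem_filter, mem_univ, true_and]
  refine forall_congr' fun a => ?_
  by_cases ha : a ∈ S <;> simp [ha, Nat.even_add_one, parity_simps]

theorem sum_prod_spin_mul_prod_ite_lt (K : W → W → ℝ) (S : Finset W) (n : CurSpace W) :
    ∑ τ : W → Bool, (∏ a ∈ S, spin (τ a)) * ∏ a, ∏ b, (if a < b then
        (K a b * spin (τ a) * spin (τ b)) ^ n.1 a b / (Nat.factorial (n.1 a b)) else 1)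
      = if currentSources n.1 = S then 2 ^ Fintype.card W * currentWeight K n.1 else 0 := by
  obtain ⟨n, hsymm, hloop⟩ := n
  have hsummand : ∀ τ : W → Bool, (∏ a ∈ S, spin (τ a)) * ∏ a, ∏ b, (if a < b then
        (K a b * spin (τ a) * spin (τ b)) ^ n a b / (Nat.factorial (n a b)) else 1)
      = currentWeight K n * ∏ a, spin (τ a) ^ ((if a ∈ S then 1 else 0) + ∑ b, n a b) := by
    intro τ
    rw [prod_ite_lt_pow_div_factorial_eq hsymm hloop, ← Fintype.prod_ite_mem]
    simp only [pow_add, prod_mul_distrib, pow_ite, pow_one, pow_zero]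
    ring
  rw [sum_congr rfl fun τ _ => hsummand τ, ← mul_sum, sum_prod_spin_pow]
  simp only [forall_even_iff_currentSources_eq, mul_ite, mul_zero, mul_comm]

theorem sum_prod_spin_mul_exp_edgeEnergy (K : W → W → ℝ) (S : Finset W) :
    ∑ τ : W → Bool, (∏ a ∈ S, spin (τ a)) * Real.exp (edgeEnergy K τ)
      = 2 ^ Fintype.card W * currentPartition K S := by
  have hτ : ∀ τ : W → Bool, HasSum (fun n : CurSpace W => (∏ a ∈ S, spin (τ a)) *
      ∏ a, ∏ b, (if a < b then
        (K a b * spin (τ a) * spin (τ b)) ^ n.1 a b / (Nat.factorial (n.1 a b)) else 1))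
      ((∏ a ∈ S, spin (τ a)) * Real.exp (edgeEnergy K τ)) := fun τ =>
    (curSpaceEquiv.hasSum_iff.mpr (hasSum_exp_edgeEnergy K τ)).mul_left _ |>.congr_fun
      fun n => by simp only [prod_ite_lt_eq_prod_edges]; rfl
  have hsum := hasSum_sum fun τ (_ : τ ∈ univ) => hτ τ
  simp only [sum_prod_spin_mul_prod_ite_lt, ← mul_ite_zero] at hsum
  rw [← hsum.tsum_eq, tsum_mul_left, currentPartition]

end Currents

section Ghost

variable {V : Type*}

def withGhost (b : Bool) (σ : V → Bool) : WithBot V → Bool :=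
  fun a => WithBot.recBotCoe b σ a

@[simp]
theorem withGhost_bot (b : Bool) (σ : V → Bool) : withGhost b σ ⊥ = b := rfl

@[simp]
theorem withGhost_coe (b : Bool) (σ : V → Bool) (i : V) : withGhost b σ i = σ i := rfl

theorem withGhost_false (σ : V → Bool) :
    withGhost false σ = fun a => !withGhost true (fun i => !σ i) a := by
  funext a
  cases a <;> simp

theorem sum_withBot [Fintype V] {M : Type*} [AddCommMonoid M] (f : WithBot V → M) :
    ∑ a, f a = f ⊥ + ∑ i : V, f i :=
  Fintype.sum_option f

theorem sum_withBot_pi [Fintype V] [DecidableEq V] {M : Type*} [AddCommMonoid M]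
    (F : (WithBot V → Bool) → M) :
    ∑ τ, F τ = ∑ b : Bool, ∑ σ : V → Bool, F (withGhost b σ) := by
  rw [← Fintype.sum_prod_type']
  refine Fintype.sum_equiv (Equiv.piOptionEquivProd (β := fun _ => Bool)) _ _ fun τ => ?_
  congr 1
  funext a
  cases a <;> rfl

variable [Fintype V] [LinearOrder V]

theorem sum_prod_spin_mul_exp_edgeEnergy_eq_two_mul (K : WithBot V → WithBot V → ℝ)
    {S : Finset (WithBot V)} (hS : Even S.card) :
    ∑ τ, (∏ a ∈ S, spin (τ a)) * Real.exp (edgeEnergy K τ)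
      = 2 * ∑ σ : V → Bool,
          (∏ a ∈ S, spin (withGhost true σ a)) * Real.exp (edgeEnergy K (withGhost true σ)) := by
  have hflip : ∑ σ : V → Bool,
      (∏ a ∈ S, spin (withGhost false σ a)) * Real.exp (edgeEnergy K (withGhost false σ))
        = ∑ σ : V → Bool,
          (∏ a ∈ S, spin (withGhost true σ a)) * Real.exp (edgeEnergy K (withGhost true σ)) := by
    simp only [withGhost_false, prod_spin_not, edgeEnergy_not, hS.neg_one_pow, one_mul]
    exact Fintype.sum_equiv (Equiv.piCongrRight fun _ => Equiv.boolNot) _ _ fun σ => rfl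
  rw [sum_withBot_pi, Fintype.sum_bool, hflip, two_mul]

theorem edgeEnergy_Jaug_withGhost_true (J : V → V → ℝ) (h : ℝ) (σ : V → Bool) :
    edgeEnergy (Jaug J h) (withGhost true σ) = ham J h σ := by
  simp [edgeEnergy, ham, sum_withBot, Jaug, spin_true, mul_sum, add_comm]

theorem Zcur_eq_currentPartition (J : V → V → ℝ) (h : ℝ) (S : Finset (WithBot V)) :
    Zcur J h S = currentPartition (Jaug J h) S := rfl

theorem two_pow_card_mul_Zcur (J : V → V → ℝ) (h : ℝ) {S : Finset (WithBot V)}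
    (hS : Even S.card) :
    2 ^ Fintype.card (WithBot V) * Zcur J h S
      = 2 * ∑ σ : V → Bool, (∏ a ∈ S, spin (withGhost true σ a)) * Real.exp (ham J h σ) := by
  rw [Zcur_eq_currentPartition, ← sum_prod_spin_mul_exp_edgeEnergy,
    sum_prod_spin_mul_exp_edgeEnergy_eq_two_mul _ hS]
  simp only [edgeEnergy_Jaug_withGhost_true]

theorem corr_eq_Zcur_div_Zcur_empty (J : V → V → ℝ) (h : ℝ) {A : Finset V}
    {S : Finset (WithBot V)} (hS : Even S.card)
    (hprod : ∀ σ : V → Bool, ∏ a ∈ S, spin (withGhost true σ a) = ∏ i ∈ A, spin (σ i)) :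
    corr J h A = Zcur J h S / Zcur J h ∅ := by
  rw [← mul_div_mul_left _ _ (pow_ne_zero (Fintype.card (WithBot V)) two_ne_zero),
    two_pow_card_mul_Zcur J h hS, two_pow_card_mul_Zcur J h (by simp),
    mul_div_mul_left _ _ two_ne_zero, corr]
  simp only [hprod, prod_empty, one_mul]

end Ghost

/-- `fun i => (i : WithBot V)` elaborates with `i : WithBot V`, so `A` is first lifted to
`Finset (WithBot V)` through the `Finset` monad. -/
theorem image_coe_eq_image_some {V : Type*} [DecidableEq (WithBot V)] (A : Finset V) :
    A.image (fun i => (i : WithBot V)) = A.image WithBot.some := by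
  ext x
  simp

theorem random_current_representation_general {V : Type*} [Fintype V] [LinearOrder V]
    (J : V → V → ℝ) (h : ℝ) (A : Finset V) :
    (Even A.card →
      corr J h A = Zcur J h (A.image (fun i => (i : WithBot V))) / Zcur J h ∅) ∧
    (Odd A.card →
      corr J h A
        = Zcur J h (insert ⊥ (A.image (fun i => (i : WithBot V)))) / Zcur J h ∅) := by
  rw [image_coe_eq_image_some]
  have hprod : ∀ σ : V → Bool,
      ∏ a ∈ A.image WithBot.some, spin (withGhost true σ a) = ∏ i ∈ A, spin (σ i) :=
    fun σ => prod_image fun _ _ _ _ h => WithBot.coe_injective h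
  have hbot : (⊥ : WithBot V) ∉ A.image WithBot.some := by simp
  have hcard : (A.image WithBot.some).card = A.card :=
    card_image_of_injective A WithBot.coe_injective
  refine ⟨fun hA => corr_eq_Zcur_div_Zcur_empty J h (hcard ▸ hA) hprod, fun hA => ?_⟩
  refine corr_eq_Zcur_div_Zcur_empty J h ?_ fun σ => ?_
  · rw [card_insert_of_notMem hbot, hcard]
    exact hA.add_one
  · rw [prod_insert hbot, hprod, withGhost_bot, spin_true, one_mul]

/-- Random current representation of correlation functions: for `|A|` even,
`⟨σ_A⟩_G = Z_{G_g}(A)/Z_{G_g}(∅)`, and for `|A|` odd,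
`⟨σ_A⟩_G = Z_{G_g}(A ∪ {g})/Z_{G_g}(∅)`, where `g = ⊥` is the ghost vertex. -/
theorem random_current_representation {V : Type*} [Fintype V] [LinearOrder V]
    (J : V → V → ℝ) (hJsym : ∀ i j, J i j = J j i) (hJ : ∀ i j, 0 ≤ J i j)
    (h : ℝ) (hh : 0 < h) (A : Finset V) :
    (Even A.card →
      corr J h A = Zcur J h (A.image (fun i => (i : WithBot V))) / Zcur J h ∅) ∧
    (Odd A.card →
      corr J h A
        = Zcur J h (insert ⊥ (A.image (fun i => (i : WithBot V)))) / Zcur J h ∅) :=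
  random_current_representation_general J h A
end
end
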